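/- Let d ≥ 1 and let I : C²_b(ℝ^d) → C_b(ℝ^d) be Lipschitz with constant K₀ and satisfy the global comparison property. Then for every R > 0 there is a constant C = C(R,d) such that for all u, v ∈ C²_b(ℝ^d): sup_{|x| ≤ R} | I(u)(x) − I(v)(x) | ≤ C · K₀ · ( ‖u − v‖_{C²(B̄_{R+1})} + sup_{|y| ≥ R} |u(y) − v(y)| ), where ‖w‖_{C²(B̄_{R+1})} denotes the C² norm with all suprema restricted to the closed ball of radius R+1 centered at the origin. -/

import Mathlib

open Metric Set

noncomputable section

abbrev Euc (d : ℕ) := EuclideanSpace ℝ (Fin d)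

variable {d : ℕ}

def supNorm (u : Euc d → ℝ) : ℝ := ⨆ x, |u x|

def gradSup (u : Euc d → ℝ) : ℝ := ⨆ x, ‖fderiv ℝ u x‖

def hessSup (u : Euc d → ℝ) : ℝ := ⨆ x, ‖iteratedFDeriv ℝ 2 u x‖

def C2Norm (u : Euc d → ℝ) : ℝ := supNorm u + gradSup u + hessSup u

def IsC2b (u : Euc d → ℝ) : Prop :=
  ContDiff ℝ 2 u ∧ ∃ M : ℝ, ∀ x, |u x| ≤ M ∧ ‖fderiv ℝ u x‖ ≤ M ∧ ‖iteratedFDeriv ℝ 2 u x‖ ≤ M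

def IsCb (f : Euc d → ℝ) : Prop := Continuous f ∧ ∃ M : ℝ, ∀ x, |f x| ≤ M

def GCP (dom : (Euc d → ℝ) → Prop) (I : (Euc d → ℝ) → Euc d → ℝ) : Prop :=
  ∀ u v, dom u → dom v → (∀ y, u y ≤ v y) → ∀ x, u x = v x → I u x ≤ I v x

def LipWith (K₀ : ℝ) (dom : (Euc d → ℝ) → Prop) (N : (Euc d → ℝ) → ℝ)
    (I : (Euc d → ℝ) → Euc d → ℝ) : Prop :=
  ∀ u v, dom u → dom v → ∀ x, |I u x - I v x| ≤ K₀ * N (fun y => u y - v y)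

def localSup (r : ℝ) (u : Euc d → ℝ) : ℝ := ⨆ x ∈ closedBall (0 : Euc d) r, |u x|

def localGradSup (r : ℝ) (u : Euc d → ℝ) : ℝ :=
  ⨆ x ∈ closedBall (0 : Euc d) r, ‖fderiv ℝ u x‖

def localHessSup (r : ℝ) (u : Euc d → ℝ) : ℝ :=
  ⨆ x ∈ closedBall (0 : Euc d) r, ‖iteratedFDeriv ℝ 2 u x‖

def localC2Norm (r : ℝ) (u : Euc d → ℝ) : ℝ := localSup r u + localGradSup r u + localHessSup r u

/-!
Let `w = u - v`, `A` its C² norm on `B̄_{R+1}` and `B` its supremum on `{|y| ≥ R}`. With a smooth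
bump `φ` equal to `1` on `B̄_R` and supported in `B̄_{R+1}`, the barriers `φ w ± (1 - φ) B`
squeeze `w` from both sides and touch it on `B̄_R`. The global comparison property squeezes
`I u x` between the values of `I` at `v` plus the two barriers, and the Lipschitz bound controls
these by `K₀` times the global C² norm of the barriers, which the Leibniz rule bounds by a
multiple of `A + B` depending only on `φ`.
-/

section Smooth

variable {E : Type*} [NormedAddCommGroup E] [NormedSpace ℝ E]

theorem norm_iteratedFDeriv_mul_le_of_forall_le {f g : E → ℝ} {N : WithTop ℕ∞}
    (hf : ContDiff ℝ N f) (hg : ContDiff ℝ N g) {x : E} {n : ℕ} (hn : (n : WithTop ℕ∞) ≤ N)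
    {a b : ℝ} (hfa : ∀ i ≤ n, ‖iteratedFDeriv ℝ i f x‖ ≤ a)
    (hgb : ∀ i ≤ n, ‖iteratedFDeriv ℝ i g x‖ ≤ b) :
    ‖iteratedFDeriv ℝ n (fun y => f y * g y) x‖ ≤ 2 ^ n * a * b := by
  have ha : 0 ≤ a := (norm_nonneg _).trans (hfa 0 n.zero_le)
  calc ‖iteratedFDeriv ℝ n (fun y => f y * g y) x‖
      ≤ ∑ i ∈ Finset.range (n + 1),
          (n.choose i : ℝ) * ‖iteratedFDeriv ℝ i f x‖ * ‖iteratedFDeriv ℝ (n - i) g x‖ :=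
        norm_iteratedFDeriv_mul_le hf hg x hn
    _ ≤ ∑ i ∈ Finset.range (n + 1), (n.choose i : ℝ) * a * b := by
        gcongr with i hi
        · exact hfa i (Finset.mem_range_succ_iff.mp hi)
        · exact hgb _ (n.sub_le i)
    _ = 2 ^ n * a * b := by
        rw [← Finset.sum_mul, ← Finset.sum_mul]
        exact_mod_cast congrArg (fun m : ℕ => (m : ℝ) * a * b) (Nat.sum_range_choose n)

theorem exists_forall_norm_iteratedFDeriv_le_of_hasCompactSupport {F : Type*}
    [NormedAddCommGroup F] [NormedSpace ℝ F] {f : E → F} {n : ℕ} (hf : ContDiff ℝ n f)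
    (h : HasCompactSupport f) : ∃ M, ∀ i ≤ n, ∀ x, ‖iteratedFDeriv ℝ i f x‖ ≤ M := by
  choose M hM using fun i : Fin (n + 1) =>
    (hf.continuous_iteratedFDeriv (by exact_mod_cast i.is_le)).bounded_above_of_compact_support
      (h.iteratedFDeriv i)
  obtain ⟨M', hM'⟩ := (Set.finite_range M).bddAbove
  exact ⟨M', fun i hi x => (hM ⟨i, Nat.lt_succ_of_le hi⟩ x).trans (hM' ⟨_, rfl⟩)⟩

theorem ContDiffBump.exists_forall_norm_iteratedFDeriv_le [HasContDiffBump E]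
    [FiniteDimensional ℝ E] {c : E} (φ : ContDiffBump c) (n : ℕ) :
    ∃ M, 1 ≤ M ∧ ∀ i ≤ n, ∀ x,
      ‖iteratedFDeriv ℝ i φ x‖ ≤ M ∧ ‖iteratedFDeriv ℝ i (fun y => 1 - φ y) x‖ ≤ M := by
  obtain ⟨M, hM⟩ := exists_forall_norm_iteratedFDeriv_le_of_hasCompactSupport
    (φ.contDiff (n := n)) φ.hasCompactSupport
  refine ⟨max M 1, le_max_right _ _, fun i hi x => ⟨(hM i hi x).trans (le_max_left _ _), ?_⟩⟩
  rcases i.eq_zero_or_pos with rfl | hi0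
  · rw [norm_iteratedFDeriv_zero, Real.norm_eq_abs, abs_of_nonneg (sub_nonneg.2 φ.le_one)]
    linarith [φ.nonneg (x := x), le_max_right M 1]
  · rw [fun_iteratedFDeriv_sub_apply contDiffAt_const φ.contDiff.contDiffAt,
      iteratedFDeriv_const_of_ne hi0.ne', Pi.zero_apply, zero_sub, norm_neg]
    exact (hM i hi x).trans (le_max_left _ _)

theorem forall_le_two_norm_iteratedFDeriv_le_iff {f : E → ℝ} {x : E} {a : ℝ} :
    (∀ i ≤ 2, ‖iteratedFDeriv ℝ i f x‖ ≤ a) ↔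
      |f x| ≤ a ∧ ‖fderiv ℝ f x‖ ≤ a ∧ ‖iteratedFDeriv ℝ 2 f x‖ ≤ a := by
  constructor
  · intro h
    exact ⟨by simpa using h 0 (by norm_num), by simpa using h 1 (by norm_num), h 2 le_rfl⟩
  · rintro ⟨h0, h1, h2⟩ i hi
    interval_cases i <;> simpa

end Smooth

theorem le_biSup_of_forall_le {α : Type*} {f : α → ℝ} {M : ℝ} (hM : ∀ x, f x ≤ M)
    {s : Set α} {y : α} (hy : y ∈ s) : f y ≤ ⨆ x ∈ s, f x :=
  le_ciSup_of_le ⟨max M 0, forall_mem_range.2 fun x =>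
      Real.iSup_le (fun _ => (hM x).trans (le_max_left _ _)) (le_max_right _ _)⟩
    y (by rw [ciSup_pos hy])

section Barrier

variable {X : Type*} {φ w : X → ℝ}

def barrier (φ w : X → ℝ) (c : ℝ) (y : X) : ℝ := φ y * w y + (1 - φ y) * c

theorem barrier_of_eq_one {c : ℝ} {y : X} (h : φ y = 1) : barrier φ w c y = w y := by
  simp [barrier, h]

theorem barrier_neg_le_and_le_barrier {B : ℝ} {y : X} (h1 : φ y ≤ 1)
    (hB : φ y ≠ 1 → |w y| ≤ B) : barrier φ w (-B) y ≤ w y ∧ w y ≤ barrier φ w B y := by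
  have hfar : (1 - φ y) * |w y| ≤ (1 - φ y) * B := by
    rcases eq_or_ne (φ y) 1 with h | h
    · simp [h]
    · exact mul_le_mul_of_nonneg_left (hB h) (by linarith)
  have hle := mul_le_mul_of_nonneg_left (le_abs_self (w y)) (sub_nonneg.2 h1)
  have hge := mul_le_mul_of_nonneg_left (neg_abs_le (w y)) (sub_nonneg.2 h1)
  constructor <;> · simp only [barrier]; nlinarith

variable {E : Type*} [NormedAddCommGroup E] [NormedSpace ℝ E] {φ w : E → ℝ}

theorem contDiff_barrier {n : WithTop ℕ∞} (hφ : ContDiff ℝ n φ) (hw : ContDiff ℝ n w) (c : ℝ) :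
    ContDiff ℝ n (barrier φ w c) :=
  (hφ.mul hw).add ((contDiff_const.sub hφ).mul contDiff_const)

theorem norm_iteratedFDeriv_barrier_le {K : Set E} {M A : ℝ} (hφ : ContDiff ℝ 2 φ)
    (hw : ContDiff ℝ 2 w) (hφK : tsupport φ ⊆ K)
    (hφM : ∀ i ≤ 2, ∀ y,
      ‖iteratedFDeriv ℝ i φ y‖ ≤ M ∧ ‖iteratedFDeriv ℝ i (fun y => 1 - φ y) y‖ ≤ M)
    (hwA : ∀ y ∈ K, ∀ i ≤ 2, ‖iteratedFDeriv ℝ i w y‖ ≤ A) (hA : 0 ≤ A) (c : ℝ) (y : E)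
    {i : ℕ} (hi : i ≤ 2) :
    ‖iteratedFDeriv ℝ i (barrier φ w c) y‖ ≤ 4 * M * (A + |c|) := by
  have hi' : (i : WithTop ℕ∞) ≤ 2 := by exact_mod_cast hi
  have hM : 0 ≤ M := (norm_nonneg _).trans (hφM 0 (by norm_num) y).1
  have h2i : (2 : ℝ) ^ i ≤ 4 := by
    calc (2 : ℝ) ^ i ≤ 2 ^ 2 := pow_le_pow_right₀ (by norm_num) hi
      _ = 4 := by norm_num
  have hnear : ‖iteratedFDeriv ℝ i (fun y => φ y * w y) y‖ ≤ 4 * M * A := by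
    by_cases hy : y ∈ K
    · refine (norm_iteratedFDeriv_mul_le_of_forall_le hφ hw hi'
        (fun j hj => (hφM j (hj.trans hi) y).1) (fun j hj => hwA y hy j (hj.trans hi))).trans ?_
      gcongr
    · have hy' : y ∉ tsupport (fun y => φ y * w y) := fun h => hy (hφK (tsupport_mul_subset_left h))
      rw [Function.notMem_support.mp fun h => hy' (support_iteratedFDeriv_subset i h), norm_zero]
      positivity
  have hconst : ∀ j, ‖iteratedFDeriv ℝ j (fun _ : E => c) y‖ ≤ |c| := by
    intro j
    rcases j.eq_zero_or_pos with rfl | hj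
    · simp
    · simp [iteratedFDeriv_const_of_ne hj.ne']
  have hfar : ‖iteratedFDeriv ℝ i (fun y => (1 - φ y) * c) y‖ ≤ 4 * M * |c| := by
    refine (norm_iteratedFDeriv_mul_le_of_forall_le (g := fun _ => c) (contDiff_const.sub hφ)
      contDiff_const hi' (fun j hj => (hφM j (hj.trans hi) y).2) (fun j _ => hconst j)).trans ?_
    gcongr
  calc ‖iteratedFDeriv ℝ i (barrier φ w c) y‖
      = ‖iteratedFDeriv ℝ i (fun y => φ y * w y) y
          + iteratedFDeriv ℝ i (fun y => (1 - φ y) * c) y‖ := by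
        unfold barrier
        rw [fun_iteratedFDeriv_add_apply ((hφ.mul hw).of_le hi').contDiffAt
          (((contDiff_const.sub hφ).mul contDiff_const).of_le hi').contDiffAt]
    _ ≤ 4 * M * A + 4 * M * |c| := (norm_add_le _ _).trans (add_le_add hnear hfar)
    _ = 4 * M * (A + |c|) := by ring

end Barrier

theorem isC2b_iff {f : Euc d → ℝ} :
    IsC2b f ↔ ContDiff ℝ 2 f ∧ ∃ M, ∀ x, ∀ i ≤ 2, ‖iteratedFDeriv ℝ i f x‖ ≤ M := by
  simp only [IsC2b, forall_le_two_norm_iteratedFDeriv_le_iff]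

theorem IsC2b.add {u v : Euc d → ℝ} (hu : IsC2b u) (hv : IsC2b v) :
    IsC2b (fun y => u y + v y) := by
  obtain ⟨hu, Mu, hMu⟩ := isC2b_iff.1 hu
  obtain ⟨hv, Mv, hMv⟩ := isC2b_iff.1 hv
  refine isC2b_iff.2 ⟨hu.add hv, Mu + Mv, fun x i hi => ?_⟩
  have hi' : (i : WithTop ℕ∞) ≤ 2 := by exact_mod_cast hi
  rw [fun_iteratedFDeriv_add_apply (hu.of_le hi').contDiffAt (hv.of_le hi').contDiffAt]
  exact (norm_add_le _ _).trans (add_le_add (hMu x i hi) (hMv x i hi))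

theorem IsC2b.sub {u v : Euc d → ℝ} (hu : IsC2b u) (hv : IsC2b v) :
    IsC2b (fun y => u y - v y) := by
  obtain ⟨hu, Mu, hMu⟩ := isC2b_iff.1 hu
  obtain ⟨hv, Mv, hMv⟩ := isC2b_iff.1 hv
  refine isC2b_iff.2 ⟨hu.sub hv, Mu + Mv, fun x i hi => ?_⟩
  have hi' : (i : WithTop ℕ∞) ≤ 2 := by exact_mod_cast hi
  rw [fun_iteratedFDeriv_sub_apply (hu.of_le hi').contDiffAt (hv.of_le hi').contDiffAt]
  exact (norm_sub_le _ _).trans (add_le_add (hMu x i hi) (hMv x i hi))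

theorem C2Norm_le_of_forall_norm_iteratedFDeriv_le {f : Euc d → ℝ} {a : ℝ}
    (h : ∀ x, ∀ i ≤ 2, ‖iteratedFDeriv ℝ i f x‖ ≤ a) : C2Norm f ≤ 3 * a := by
  simp only [forall_le_two_norm_iteratedFDeriv_le_iff] at h
  unfold C2Norm supNorm gradSup hessSup
  linarith [ciSup_le fun x => (h x).1, ciSup_le fun x => (h x).2.1, ciSup_le fun x => (h x).2.2]

theorem IsC2b.norm_iteratedFDeriv_le_localC2Norm {f : Euc d → ℝ} (hf : IsC2b f) {r : ℝ}
    {y : Euc d} (hy : y ∈ closedBall 0 r) : ∀ i ≤ 2, ‖iteratedFDeriv ℝ i f y‖ ≤ localC2Norm r f := by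
  obtain ⟨-, M, hM⟩ := hf
  have h0 := le_biSup_of_forall_le (fun x => (hM x).1) hy
  have h1 := le_biSup_of_forall_le (fun x => (hM x).2.1) hy
  have h2 := le_biSup_of_forall_le (fun x => (hM x).2.2) hy
  rw [forall_le_two_norm_iteratedFDeriv_le_iff]
  unfold localC2Norm localSup localGradSup localHessSup
  refine ⟨?_, ?_, ?_⟩ <;>
    linarith [abs_nonneg (f y), norm_nonneg (fderiv ℝ f y), norm_nonneg (iteratedFDeriv ℝ 2 f y)]

theorem abs_sub_le_of_GCP_of_LipWith {dom : (Euc d → ℝ) → Prop} {N : (Euc d → ℝ) → ℝ}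
    {I : (Euc d → ℝ) → Euc d → ℝ} {K₀ : ℝ} (hK₀ : 0 ≤ K₀) (hGCP : GCP dom I)
    (hLip : LipWith K₀ dom N I) {u v gl gu : Euc d → ℝ} (hu : dom u) (hv : dom v)
    (hvl : dom (fun y => v y + gl y)) (hvu : dom (fun y => v y + gu y))
    (hle : ∀ y, gl y ≤ u y - v y ∧ u y - v y ≤ gu y) {x : Euc d}
    (hxl : gl x = u x - v x) (hxu : gu x = u x - v x) {M : ℝ} (hNl : N gl ≤ M)
    (hNu : N gu ≤ M) : |I u x - I v x| ≤ K₀ * M := by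
  have hup : I u x ≤ I (fun y => v y + gu y) x :=
    hGCP _ _ hu hvu (fun y => by linarith [(hle y).2]) x (by linarith)
  have hdown : I (fun y => v y + gl y) x ≤ I u x :=
    hGCP _ _ hvl hu (fun y => by linarith [(hle y).1]) x (by linarith)
  have hLipu := hLip _ _ hvu hv x
  have hLipl := hLip _ _ hvl hv x
  simp only [add_sub_cancel_left, abs_le] at hLipu hLipl
  rw [abs_sub_le_iff]
  constructor <;>
    linarith [mul_le_mul_of_nonneg_left hNu hK₀, mul_le_mul_of_nonneg_left hNl hK₀]

theorem near_far_estimate_general (d : ℕ) (K₀ : ℝ) (hK₀ : 0 ≤ K₀)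
    (R : ℝ) (hR : 0 < R) :
    ∃ C : ℝ, 0 < C ∧
      ∀ I : (Euc d → ℝ) → Euc d → ℝ,
        (∀ u, IsC2b u → IsCb (I u)) →
        LipWith K₀ IsC2b C2Norm I →
        GCP IsC2b I →
        ∀ u v, IsC2b u → IsC2b v → ∀ x : Euc d, ‖x‖ ≤ R →
          |I u x - I v x| ≤
            C * K₀ * (localC2Norm (R + 1) (fun y => u y - v y)
              + ⨆ y ∈ {y : Euc d | R ≤ ‖y‖}, |u y - v y|) := by
  let φ : ContDiffBump (0 : Euc d) := ⟨R, R + 1, hR, by linarith⟩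
  obtain ⟨M, hM, hφM⟩ := φ.exists_forall_norm_iteratedFDeriv_le 2
  refine ⟨12 * M, by linarith, fun I _ hLip hGCP u v hu hv x hx => ?_⟩
  set w : Euc d → ℝ := fun y => u y - v y
  set A := localC2Norm (R + 1) w
  set B := ⨆ y ∈ {y : Euc d | R ≤ ‖y‖}, |u y - v y|
  have hw : IsC2b w := hu.sub hv
  have hwA : ∀ y ∈ closedBall 0 (R + 1), ∀ i ≤ 2, ‖iteratedFDeriv ℝ i w y‖ ≤ A :=
    fun y hy => hw.norm_iteratedFDeriv_le_localC2Norm hy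
  have hA : 0 ≤ A := (norm_nonneg _).trans (hwA 0 (mem_closedBall_self (by linarith)) 0 (by norm_num))
  have hB : 0 ≤ B := Real.iSup_nonneg fun _ => Real.iSup_nonneg fun _ => abs_nonneg _
  have hφ1 : ∀ y, ‖y‖ ≤ R → φ y = 1 := fun y hy =>
    φ.one_of_mem_closedBall (mem_closedBall_zero_iff.2 hy)
  have hwB : ∀ y, φ y ≠ 1 → |w y| ≤ B := by
    obtain ⟨-, Mw, hMw⟩ := hw
    exact fun y hy => le_biSup_of_forall_le (fun z => (hMw z).1)
      (show R ≤ ‖y‖ from (lt_of_not_ge fun h => hy (hφ1 y h)).le)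
  have hbarrier : ∀ c, |c| = B →
      IsC2b (fun y => v y + barrier φ w c y) ∧ C2Norm (barrier φ w c) ≤ 12 * M * (A + B) := by
    intro c hc
    have hbound := fun y i (hi : i ≤ 2) => hc ▸ norm_iteratedFDeriv_barrier_le φ.contDiff hw.1
      φ.tsupport_eq.subset hφM hwA hA c y hi
    exact ⟨hv.add (isC2b_iff.2 ⟨contDiff_barrier φ.contDiff hw.1 c, _, hbound⟩),
      (C2Norm_le_of_forall_norm_iteratedFDeriv_le hbound).trans_eq (by ring)⟩
  obtain ⟨hlo, hNlo⟩ := hbarrier (-B) (by rw [abs_neg, abs_of_nonneg hB])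
  obtain ⟨hhi, hNhi⟩ := hbarrier B (abs_of_nonneg hB)
  have hx1 := hφ1 x hx
  calc |I u x - I v x| ≤ K₀ * (12 * M * (A + B)) :=
        abs_sub_le_of_GCP_of_LipWith hK₀ hGCP hLip hu hv hlo hhi
          (fun y => barrier_neg_le_and_le_barrier φ.le_one (hwB y))
          (barrier_of_eq_one hx1) (barrier_of_eq_one hx1) hNlo hNhi
    _ = 12 * M * K₀ * (A + B) := by ring

/-- near/far splitting estimate for operators with the GCP:
`sup_{|x| ≤ R} |I(u)(x) - I(v)(x)|
  ≤ C K₀ ( ‖u-v‖_{C²(B̄_{R+1})} + sup_{|y| ≥ R} |u(y) - v(y)| )`,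
with `C` depending only on `R` and `d`. -/
theorem near_far_estimate (d : ℕ) (hd : 1 ≤ d) (K₀ : ℝ) (hK₀ : 0 ≤ K₀)
    (R : ℝ) (hR : 0 < R) :
    ∃ C : ℝ, 0 < C ∧
      ∀ I : (Euc d → ℝ) → Euc d → ℝ,
        (∀ u, IsC2b u → IsCb (I u)) →
        LipWith K₀ IsC2b C2Norm I →
        GCP IsC2b I →
        ∀ u v, IsC2b u → IsC2b v → ∀ x : Euc d, ‖x‖ ≤ R →
          |I u x - I v x| ≤
            C * K₀ * (localC2Norm (R + 1) (fun y => u y - v y)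
              + ⨆ y ∈ {y : Euc d | R ≤ ‖y‖}, |u y - v y|) :=
  near_far_estimate_general d K₀ hK₀ R hR

end
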